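/- arXiv:2102.05413 — 4 statements merged into one kernel-verified Lean document; each statement's English description precedes it below -/
import Mathlib

section
/- With notation as before: for every λ > 0, 0 ≤ d_W - de_S ≤ (1/λ) H(π^S) ≤ (1/λ) H(p · p̃ᵀ), where de_S = d_S - (1/λ)H(π^S) and H(p·p̃ᵀ) is the entropy of the product coupling with entries p_i p̃_j. -/
/-- A transport plan with marginals `p` and `pt`. -/
def IsPlan {n m : ℕ} (p : Fin n → ℝ) (pt : Fin m → ℝ) (π : Fin n → Fin m → ℝ) : Prop :=
  (∀ i j, 0 ≤ π i j) ∧ (∀ i, ∑ j, π i j = p i) ∧ (∀ j, ∑ i, π i j = pt j)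

/-- Transport cost. -/
def cost {n m : ℕ} (d π : Fin n → Fin m → ℝ) : ℝ := ∑ i, ∑ j, π i j * d i j

/-- Entropy of a plan (with `0 * log 0 = 0`, as `Real.log 0 = 0`). -/
noncomputable def ent {n m : ℕ} (π : Fin n → Fin m → ℝ) : ℝ :=
  -∑ i, ∑ j, π i j * Real.log (π i j)

/-!
Comparing `πS` with `πW` in the regularized problem and `πW` with `πS` in the unregularized one
sandwiches `d_W - (d_S - H(πS)/λ)` between `H(πW)/λ ≥ 0` and `H(πS)/λ`. The last bound is
subadditivity of entropy: by Gibbs' inequality `∑ π log π ≥ ∑ π log (p ⊗ p̃)`, and the right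
hand side depends only on the marginals, so it equals `-H(p ⊗ p̃)`.
-/

open Finset

lemma IsMinOn.sub_regularized_mem_Icc {α : Type*} {s : Set α} {f g : α → ℝ} {ε : ℝ} {a b : α}
    (hε : 0 ≤ ε) (hga : 0 ≤ g a) (ha : IsMinOn f s a) (hb : IsMinOn (fun x => f x - ε * g x) s b)
    (has : a ∈ s) (hbs : b ∈ s) :
    f a - (f b - ε * g b) ∈ Set.Icc 0 (ε * g b) := by
  have hab : f a ≤ f b := isMinOn_iff.1 ha b hbs
  have hba : f b - ε * g b ≤ f a - ε * g a := isMinOn_iff.1 hb a has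
  constructor <;> linarith [mul_nonneg hε hga]

namespace Real

lemma mul_log_le_mul_log_add_sub {x y : ℝ} (hx : 0 ≤ x) (hy : 0 < y) :
    x * log y ≤ x * log x + y - x := by
  rcases hx.eq_or_lt with rfl | hx
  · simpa using hy.le
  have h : x * (log y - log x) ≤ x * (y / x - 1) := by
    rw [← log_div hy.ne' hx.ne']
    exact mul_le_mul_of_nonneg_left (log_le_sub_one_of_pos (div_pos hy hx)) hx.le
  rw [mul_sub, mul_sub, mul_div_cancel₀ y hx.ne'] at h
  linarith

end Real

lemma ent_eq_sum_negMulLog {n m : ℕ} (π : Fin n → Fin m → ℝ) :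
    ent π = ∑ i, ∑ j, Real.negMulLog (π i j) := by
  simp only [ent, Real.negMulLog, neg_mul, sum_neg_distrib]

lemma ent_prod {n m : ℕ} {p : Fin n → ℝ} {pt : Fin m → ℝ} (hps : ∑ i, p i = 1)
    (hpts : ∑ j, pt j = 1) :
    ent (fun i j => p i * pt j) =
      -(∑ i, p i * Real.log (p i) + ∑ j, pt j * Real.log (pt j)) := by
  simp_rw [ent_eq_sum_negMulLog, Real.negMulLog_mul, sum_add_distrib, ← sum_mul, ← mul_sum,
    ← sum_mul, hps, hpts, one_mul]
  simp only [Real.negMulLog, neg_mul, sum_neg_distrib]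
  ring

namespace IsPlan

variable {n m : ℕ} {p : Fin n → ℝ} {pt : Fin m → ℝ} {π : Fin n → Fin m → ℝ}

lemma le_left (h : IsPlan p pt π) (i : Fin n) (j : Fin m) : π i j ≤ p i :=
  h.2.1 i ▸ single_le_sum (fun j _ => h.1 i j) (mem_univ j)

lemma le_right (h : IsPlan p pt π) (i : Fin n) (j : Fin m) : π i j ≤ pt j :=
  h.2.2 j ▸ single_le_sum (fun i _ => h.1 i j) (mem_univ i)

lemma left_nonneg (h : IsPlan p pt π) (i : Fin n) : 0 ≤ p i :=
  h.2.1 i ▸ sum_nonneg fun j _ => h.1 i j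

lemma right_nonneg (h : IsPlan p pt π) (j : Fin m) : 0 ≤ pt j :=
  h.2.2 j ▸ sum_nonneg fun i _ => h.1 i j

lemma sum_sum_eq_sum_left (h : IsPlan p pt π) : ∑ i, ∑ j, π i j = ∑ i, p i := by
  simp_rw [h.2.1]

lemma le_one (h : IsPlan p pt π) (hps : ∑ i, p i = 1) (i : Fin n) (j : Fin m) : π i j ≤ 1 :=
  calc π i j ≤ p i := h.le_left i j
    _ ≤ ∑ i, p i := single_le_sum (fun i _ => h.left_nonneg i) (mem_univ i)
    _ = 1 := hps

lemma ent_nonneg (h : IsPlan p pt π) (hps : ∑ i, p i = 1) : 0 ≤ ent π := by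
  rw [ent_eq_sum_negMulLog]
  exact sum_nonneg fun i _ => sum_nonneg fun j _ =>
    Real.negMulLog_nonneg (h.1 i j) (h.le_one hps i j)

lemma sum_sum_mul_log_marginals (h : IsPlan p pt π) :
    ∑ i, ∑ j, π i j * (Real.log (p i) + Real.log (pt j)) =
      ∑ i, p i * Real.log (p i) + ∑ j, pt j * Real.log (pt j) := by
  simp_rw [mul_add, sum_add_distrib]
  rw [sum_comm (f := fun i j => π i j * Real.log (pt j))]
  simp_rw [← sum_mul, h.2.1, h.2.2]

lemma mul_log_marginals_le (h : IsPlan p pt π) (i : Fin n) (j : Fin m) :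
    π i j * (Real.log (p i) + Real.log (pt j)) ≤
      π i j * Real.log (π i j) + p i * pt j - π i j := by
  rcases (h.1 i j).eq_or_lt with h0 | h0
  · rw [← h0]
    simpa using mul_nonneg (h.left_nonneg i) (h.right_nonneg j)
  have hpi := h0.trans_le (h.le_left i j)
  have hptj := h0.trans_le (h.le_right i j)
  rw [← Real.log_mul hpi.ne' hptj.ne']
  exact Real.mul_log_le_mul_log_add_sub h0.le (mul_pos hpi hptj)

lemma sum_mul_log_add_sum_mul_log_le (h : IsPlan p pt π) (hpts : ∑ j, pt j = 1) :
    ∑ i, p i * Real.log (p i) + ∑ j, pt j * Real.log (pt j) ≤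
      ∑ i, ∑ j, π i j * Real.log (π i j) := by
  have hgibbs := sum_le_sum fun i (_ : i ∈ univ) =>
    sum_le_sum fun j (_ : j ∈ univ) => h.mul_log_marginals_le i j
  simp_rw [sum_sub_distrib, sum_add_distrib, ← mul_sum, hpts, mul_one] at hgibbs
  rw [h.sum_sum_mul_log_marginals, h.sum_sum_eq_sum_left] at hgibbs
  linarith

lemma ent_le_ent_prod (h : IsPlan p pt π) (hps : ∑ i, p i = 1) (hpts : ∑ j, pt j = 1) :
    ent π ≤ ent (fun i j => p i * pt j) := by
  rw [ent_prod hps hpts, ent]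
  linarith [h.sum_mul_log_add_sum_mul_log_le hpts]

end IsPlan

theorem wasserstein_vs_entropic_sinkhorn_general {n m : ℕ}
    (d : Fin n → Fin m → ℝ) (p : Fin n → ℝ) (pt : Fin m → ℝ)
    (hps : ∑ i, p i = 1)
    (hpts : ∑ j, pt j = 1)
    (lam : ℝ) (hlam : 0 < lam)
    (πW πS : Fin n → Fin m → ℝ)
    (hW : IsPlan p pt πW) (hWopt : ∀ π, IsPlan p pt π → cost d πW ≤ cost d π)
    (hS : IsPlan p pt πS)
    (hSopt : ∀ π, IsPlan p pt π →
      cost d πS - (1/lam) * ent πS ≤ cost d π - (1/lam) * ent π) :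
    0 ≤ cost d πW - (cost d πS - (1/lam) * ent πS) ∧
    cost d πW - (cost d πS - (1/lam) * ent πS) ≤ (1/lam) * ent πS ∧
    (1/lam) * ent πS ≤ (1/lam) * ent (fun i j => p i * pt j) := by
  have hlam' : 0 ≤ 1 / lam := by positivity
  obtain ⟨hlower, hupper⟩ := IsMinOn.sub_regularized_mem_Icc (s := {π | IsPlan p pt π}) hlam'
    (hW.ent_nonneg hps) (isMinOn_iff.2 hWopt) (isMinOn_iff.2 hSopt) hW hS
  exact ⟨hlower, hupper, mul_le_mul_of_nonneg_left (hS.ent_le_ent_prod hps hpts) hlam'⟩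

theorem wasserstein_vs_entropic_sinkhorn {n m : ℕ}
    (d : Fin n → Fin m → ℝ) (p : Fin n → ℝ) (pt : Fin m → ℝ)
    (hp : ∀ i, 0 ≤ p i) (hps : ∑ i, p i = 1)
    (hpt : ∀ j, 0 ≤ pt j) (hpts : ∑ j, pt j = 1)
    (lam : ℝ) (hlam : 0 < lam)
    (πW πS : Fin n → Fin m → ℝ)
    (hW : IsPlan p pt πW) (hWopt : ∀ π, IsPlan p pt π → cost d πW ≤ cost d π)
    (hS : IsPlan p pt πS)
    (hSopt : ∀ π, IsPlan p pt π →
      cost d πS - (1/lam) * ent πS ≤ cost d π - (1/lam) * ent π) :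
    0 ≤ cost d πW - (cost d πS - (1/lam) * ent πS) ∧
    cost d πW - (cost d πS - (1/lam) * ent πS) ≤ (1/lam) * ent πS ∧
    (1/lam) * ent πS ≤ (1/lam) * ent (fun i j => p i * pt j) :=
  wasserstein_vs_entropic_sinkhorn_general d p pt hps hpts lam hlam πW πS hW hWopt hS hSopt
end

section
/- If π^*_{ij} = exp(-λ(d_{ij} - β_i - γ_j) - 1) for some vectors β ∈ ℝ^n, γ ∈ ℝ^m, and π^* is a transport plan with marginals p and p̃ (strictly positive probability vectors), then π^* is the unique minimizer of ∑_{i,j} π_{ij} d_{ij} + (1/λ)∑_{i,j} π_{ij} log π_{ij} over all transport plans with these marginals. -/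
/-! Since `log π*ᵢⱼ = -λ (dᵢⱼ - βᵢ - γⱼ) - 1`, the weight `d + λ⁻¹ log π*` splits into a row term
plus a column term, so its total against a plan depends only on the marginals. Hence for every
plan `π` the objective exceeds its value at `π*` by exactly `λ⁻¹ ∑ π*ᵢⱼ klFun (πᵢⱼ / π*ᵢⱼ)`, a
Kullback–Leibler divergence, which is nonnegative and vanishes only at `π = π*`. -/

open Finset InformationTheory

lemma sum_sum_mul_add_eq_of_marginals {ι κ : Type*} [Fintype ι] [Fintype κ]
    {π σ : ι → κ → ℝ} (hrow : ∀ i, ∑ j, π i j = ∑ j, σ i j)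
    (hcol : ∀ j, ∑ i, π i j = ∑ i, σ i j) (a : ι → ℝ) (b : κ → ℝ) :
    ∑ i, ∑ j, π i j * (a i + b j) = ∑ i, ∑ j, σ i j * (a i + b j) := by
  have hsplit : ∀ τ : ι → κ → ℝ, ∑ i, ∑ j, τ i j * (a i + b j)
      = ∑ i, (∑ j, τ i j) * a i + ∑ j, (∑ i, τ i j) * b j := by
    intro τ
    simp only [mul_add, sum_add_distrib, sum_mul]
    rw [sum_comm (f := fun i j => τ i j * b j)]
  simp only [hsplit, hrow, hcol]

lemma mul_log_sub_mul_log_sub_add_eq_mul_klFun {a b : ℝ} (hb : b ≠ 0) :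
    a * Real.log a - a * Real.log b - a + b = b * klFun (a / b) := by
  rcases eq_or_ne a 0 with rfl | ha
  · simp [klFun_zero]
  · rw [klFun_apply, Real.log_div ha hb]
    field_simp
    ring

lemma mul_klFun_div_eq_zero_iff {a b : ℝ} (ha : 0 ≤ a) (hb : 0 < b) :
    b * klFun (a / b) = 0 ↔ a = b := by
  rw [mul_eq_zero, klFun_eq_zero_iff (div_nonneg ha hb.le), div_eq_one_iff_eq hb.ne']
  simp [hb.ne']

lemma mul_klFun_div_nonneg {a b : ℝ} (ha : 0 ≤ a) (hb : 0 < b) : 0 ≤ b * klFun (a / b) :=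
  mul_nonneg hb.le (klFun_nonneg (div_nonneg ha hb.le))

section KLGap

variable {ι κ : Type*} [Fintype ι] [Fintype κ] {π σ : ι → κ → ℝ}

lemma sum_sum_mul_klFun_div_nonneg (hπ : ∀ i j, 0 ≤ π i j) (hσ : ∀ i j, 0 < σ i j) :
    0 ≤ ∑ i, ∑ j, σ i j * klFun (π i j / σ i j) :=
  sum_nonneg fun i _ => sum_nonneg fun j _ => mul_klFun_div_nonneg (hπ i j) (hσ i j)

lemma sum_sum_mul_klFun_div_eq_zero_iff (hπ : ∀ i j, 0 ≤ π i j) (hσ : ∀ i j, 0 < σ i j) :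
    ∑ i, ∑ j, σ i j * klFun (π i j / σ i j) = 0 ↔ π = σ := by
  have hterm : ∀ i j, 0 ≤ σ i j * klFun (π i j / σ i j) := fun i j =>
    mul_klFun_div_nonneg (hπ i j) (hσ i j)
  rw [Fintype.sum_eq_zero_iff_of_nonneg fun i => sum_nonneg fun j _ => hterm i j, funext_iff,
    funext_iff]
  refine forall_congr' fun i => ?_
  rw [Pi.zero_apply, Fintype.sum_eq_zero_iff_of_nonneg (hterm i), funext_iff, funext_iff]
  exact forall_congr' fun j => mul_klFun_div_eq_zero_iff (hπ i j) (hσ i j)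

end KLGap

lemma IsPlan.sum_sum_mul_add_eq {n m : ℕ} {p : Fin n → ℝ} {pt : Fin m → ℝ}
    {π σ : Fin n → Fin m → ℝ} (hπ : IsPlan p pt π) (hσ : IsPlan p pt σ)
    (a : Fin n → ℝ) (b : Fin m → ℝ) :
    ∑ i, ∑ j, π i j * (a i + b j) = ∑ i, ∑ j, σ i j * (a i + b j) :=
  sum_sum_mul_add_eq_of_marginals (fun i => (hπ.2.1 i).trans (hσ.2.1 i).symm)
    (fun j => (hπ.2.2 j).trans (hσ.2.2 j).symm) a b

lemma regularized_cost_sub_eq_sum_mul_klFun_of_gibbs {n m : ℕ} {d : Fin n → Fin m → ℝ}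
    {p : Fin n → ℝ} {pt : Fin m → ℝ} {lam : ℝ} (hlam : lam ≠ 0) {β : Fin n → ℝ} {γ : Fin m → ℝ}
    {πstar π : Fin n → Fin m → ℝ}
    (hform : ∀ i j, πstar i j = Real.exp (-lam * (d i j - β i - γ j) - 1))
    (hplan : IsPlan p pt πstar) (hπ : IsPlan p pt π) :
    cost d π + (1/lam) * ∑ i, ∑ j, π i j * Real.log (π i j)
      - (cost d πstar + (1/lam) * ∑ i, ∑ j, πstar i j * Real.log (πstar i j))
      = (1/lam) * ∑ i, ∑ j, πstar i j * klFun (π i j / πstar i j) := by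
  have hstar_pos : ∀ i j, 0 < πstar i j := fun i j => hform i j ▸ Real.exp_pos _
  have hcost : ∀ τ : Fin n → Fin m → ℝ,
      cost d τ + (1/lam) * ∑ i, ∑ j, τ i j * Real.log (πstar i j)
        = ∑ i, ∑ j, τ i j * (β i - 1/lam + γ j) := by
    intro τ
    simp only [cost, mul_sum, ← sum_add_distrib]
    refine sum_congr rfl fun i _ => sum_congr rfl fun j _ => ?_
    rw [hform, Real.log_exp]
    field_simp
    ring
  have hgap : ∀ i j, πstar i j * klFun (π i j / πstar i j) = π i j * Real.log (π i j)
      - π i j * Real.log (πstar i j) - π i j + πstar i j := fun i j =>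
    (mul_log_sub_mul_log_sub_add_eq_mul_klFun (hstar_pos i j).ne').symm
  have hmass := hπ.sum_sum_mul_add_eq hplan (fun _ => 1) (fun _ => 0)
  simp only [add_zero, mul_one] at hmass
  simp only [hgap, sum_add_distrib, sum_sub_distrib]
  linear_combination hcost π - hcost πstar + hπ.sum_sum_mul_add_eq hplan (fun i => β i - 1/lam) γ
    + (1/lam) * hmass

theorem gibbs_form_is_unique_minimizer_general {n m : ℕ}
    (d : Fin n → Fin m → ℝ) (p : Fin n → ℝ) (pt : Fin m → ℝ)
    (lam : ℝ) (hlam : 0 < lam)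
    (β : Fin n → ℝ) (γ : Fin m → ℝ)
    (πstar : Fin n → Fin m → ℝ)
    (hform : ∀ i j, πstar i j = Real.exp (-lam * (d i j - β i - γ j) - 1))
    (hplan : IsPlan p pt πstar) :
    (∀ π, IsPlan p pt π →
      cost d πstar + (1/lam) * ∑ i, ∑ j, πstar i j * Real.log (πstar i j)
        ≤ cost d π + (1/lam) * ∑ i, ∑ j, π i j * Real.log (π i j)) ∧
    (∀ π, IsPlan p pt π →
      (∀ π', IsPlan p pt π' →
        cost d π + (1/lam) * ∑ i, ∑ j, π i j * Real.log (π i j)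
          ≤ cost d π' + (1/lam) * ∑ i, ∑ j, π' i j * Real.log (π' i j)) →
      π = πstar) := by
  have hstar_pos : ∀ i j, 0 < πstar i j := fun i j => hform i j ▸ Real.exp_pos _
  have hinv : 0 < 1/lam := one_div_pos.mpr hlam
  have hexcess := fun π (hπ : IsPlan p pt π) =>
    regularized_cost_sub_eq_sum_mul_klFun_of_gibbs hlam.ne' hform hplan hπ
  refine ⟨fun π hπ => ?_, fun π hπ hmin => ?_⟩
  · have := mul_nonneg hinv.le (sum_sum_mul_klFun_div_nonneg hπ.1 hstar_pos)
    linarith [hexcess π hπ]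
  · have hle : 1/lam * ∑ i, ∑ j, πstar i j * klFun (π i j / πstar i j) ≤ 0 := by
      linarith [hexcess π hπ, hmin πstar hplan]
    refine (sum_sum_mul_klFun_div_eq_zero_iff hπ.1 hstar_pos).1 (le_antisymm ?_
      (sum_sum_mul_klFun_div_nonneg hπ.1 hstar_pos))
    exact nonpos_of_mul_nonpos_right hle hinv

theorem gibbs_form_is_unique_minimizer {n m : ℕ}
    (d : Fin n → Fin m → ℝ) (p : Fin n → ℝ) (pt : Fin m → ℝ)
    (hp : ∀ i, 0 < p i) (hps : ∑ i, p i = 1)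
    (hpt : ∀ j, 0 < pt j) (hpts : ∑ j, pt j = 1)
    (lam : ℝ) (hlam : 0 < lam)
    (β : Fin n → ℝ) (γ : Fin m → ℝ)
    (πstar : Fin n → Fin m → ℝ)
    (hform : ∀ i j, πstar i j = Real.exp (-lam * (d i j - β i - γ j) - 1))
    (hplan : IsPlan p pt πstar) :
    (∀ π, IsPlan p pt π →
      cost d πstar + (1/lam) * ∑ i, ∑ j, πstar i j * Real.log (πstar i j)
        ≤ cost d π + (1/lam) * ∑ i, ∑ j, π i j * Real.log (π i j)) ∧
    (∀ π, IsPlan p pt π →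
      (∀ π', IsPlan p pt π' →
        cost d π + (1/lam) * ∑ i, ∑ j, π i j * Real.log (π i j)
          ≤ cost d π' + (1/lam) * ∑ i, ∑ j, π' i j * Real.log (π' i j)) →
      π = πstar) :=
  gibbs_form_is_unique_minimizer_general d p pt lam hlam β γ πstar hform hplan
end

section
/- (Sinkhorn's theorem, existence and essential uniqueness of scaling) Let K ∈ ℝ^{n×m} be a matrix with strictly positive entries, and let p ∈ ℝ^n, p̃ ∈ ℝ^m be strictly positive vectors with ∑_i p_i = ∑_j p̃_j. Then there exist strictly positive diagonal scalings, i.e., vectors u ∈ ℝ_{>0}^n and v ∈ ℝ_{>0}^m, such that the matrix with entries u_i K_{ij} v_j has row sums p_i and column sums p̃_j; moreover u and v are unique up to replacing (u, v) by (c·u, v/c) for a constant c > 0. -/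
/-!
Existence is variational. Since `∑ p = ∑ q`, the potential
`F y = ∑ i, p i * log (∑ j, K i j * exp (y j)) - ∑ j, q j * y j` is invariant under adding a
constant to `y`, and on vectors with `max y = 0` its sublevel sets are bounded, so `F` attains a
global minimum. Setting `v j = exp (y j)` and `u i = p i / ∑ j, K i j * v j` gives the row sums
by construction, and the vanishing of `∂F/∂y j` at the minimum is exactly the column condition.

Uniqueness: for two scalings put `r = u' / u`, `s = v' / v` and `c = max r`. Each column
equation averages `r` and gives `c * s j ≥ 1`; the row equation at the maximizing row then forces
`c * s j = 1` for all `j`, and the remaining rows force `r i = c`.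
-/

open Finset Real

variable {ι κ : Type*} [Fintype ι] [Fintype κ]

lemma sum_pos_iff_nonempty {f : ι → ℝ} (hf : ∀ i, 0 < f i) : 0 < ∑ i, f i ↔ Nonempty ι := by
  simp [sum_pos_iff_of_nonneg fun i _ => (hf i).le, hf]

lemma nonempty_iff_of_sum_eq {p : ι → ℝ} {q : κ → ℝ} (hp : ∀ i, 0 < p i) (hq : ∀ j, 0 < q j)
    (hsum : ∑ i, p i = ∑ j, q j) : Nonempty ι ↔ Nonempty κ := by
  rw [← sum_pos_iff_nonempty hp, ← sum_pos_iff_nonempty hq, hsum]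

lemma sum_mul_exp_pos [Nonempty κ] {a : κ → ℝ} (ha : ∀ j, 0 < a j) (y : κ → ℝ) :
    0 < ∑ j, a j * exp (y j) :=
  sum_pos (fun j _ => mul_pos (ha j) (exp_pos _)) univ_nonempty

lemma log_add_le_log_sum_mul_exp {a : κ → ℝ} (ha : ∀ j, 0 < a j) (y : κ → ℝ) (k : κ) :
    log (a k) + y k ≤ log (∑ j, a j * exp (y j)) := by
  have hk : 0 < a k * exp (y k) := mul_pos (ha k) (exp_pos _)
  rw [← log_exp (y k), ← log_mul (ha k).ne' (exp_pos _).ne']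
  exact log_le_log hk
    (single_le_sum (fun j _ => (mul_pos (ha j) (exp_pos _)).le) (mem_univ k))

noncomputable def sinkhornPotential (K : ι → κ → ℝ) (p : ι → ℝ) (q : κ → ℝ) (y : κ → ℝ) : ℝ :=
  ∑ i, p i * log (∑ j, K i j * exp (y j)) - ∑ j, q j * y j

namespace sinkhornPotential

variable {K : ι → κ → ℝ} {p : ι → ℝ} {q : κ → ℝ}

lemma add_const [Nonempty κ] (hK : ∀ i j, 0 < K i j) (hsum : ∑ i, p i = ∑ j, q j)
    (y : κ → ℝ) (a : ℝ) :
    sinkhornPotential K p q (fun j => y j + a) = sinkhornPotential K p q y := by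
  have hrow (i : ι) : log (∑ j, K i j * exp (y j + a)) = a + log (∑ j, K i j * exp (y j)) := by
    simp_rw [exp_add, ← mul_assoc, ← sum_mul, mul_comm _ (exp a)]
    rw [log_mul (exp_pos a).ne' (sum_mul_exp_pos (hK i) y).ne', log_exp]
  simp only [sinkhornPotential, hrow, mul_add, sum_add_distrib, ← sum_mul, hsum]
  ring

lemma continuous [Nonempty κ] (hK : ∀ i j, 0 < K i j) :
    Continuous (sinkhornPotential K p q) := by
  unfold sinkhornPotential
  refine .sub (continuous_finsetSum _ fun i _ => continuous_const.mul (.log ?_ ?_)) ?_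
  · fun_prop
  · exact fun y => (sum_mul_exp_pos (hK i) y).ne'
  · fun_prop

lemma add_mul_sub_le_of_forall_le (hK : ∀ i j, 0 < K i j) (hp : ∀ i, 0 ≤ p i) (hq : ∀ j, 0 ≤ q j)
    (hsum : ∑ i, p i = ∑ j, q j) {y : κ → ℝ} {k : κ} (hy : ∀ j, y j ≤ y k) (j : κ) :
    ∑ i, p i * log (K i k) + q j * (y k - y j) ≤ sinkhornPotential K p q y := by
  calc ∑ i, p i * log (K i k) + q j * (y k - y j)
      ≤ ∑ i, p i * log (K i k) + ∑ j', q j' * (y k - y j') := by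
        gcongr
        exact single_le_sum (fun j' _ => mul_nonneg (hq j') (sub_nonneg.2 (hy j'))) (mem_univ j)
    _ = ∑ i, p i * (log (K i k) + y k) - ∑ j', q j' * y j' := by
        simp only [mul_add, mul_sub, sum_add_distrib, sum_sub_distrib, ← sum_mul, hsum]
        ring
    _ ≤ sinkhornPotential K p q y := by
        unfold sinkhornPotential
        gcongr with i
        exacts [hp i, log_add_le_log_sum_mul_exp (hK i) y k]

lemma hasDerivAt_line [Nonempty κ] (hK : ∀ i j, 0 < K i j) (y e : κ → ℝ) :
    HasDerivAt (fun t => sinkhornPotential K p q (fun j => y j + t * e j))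
      (∑ i, p i * ((∑ j, K i j * exp (y j) * e j) / ∑ j, K i j * exp (y j)) - ∑ j, q j * e j)
      0 := by
  have hcoord (j : κ) : HasDerivAt (fun t => y j + t * e j) (e j) 0 :=
    (hasDerivAt_mul_const _).const_add _
  have hrow (i : ι) : HasDerivAt (fun t => ∑ j, K i j * exp (y j + t * e j))
      (∑ j, K i j * exp (y j) * e j) 0 := by
    refine HasDerivAt.fun_sum fun j _ => ?_
    simpa [mul_assoc] using ((hcoord j).exp).const_mul (K i j)
  refine .sub (.fun_sum fun i _ => .const_mul _ ?_) (.fun_sum fun j _ => (hcoord j).const_mul _)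
  simpa using (hrow i).log (by simpa using (sum_mul_exp_pos (hK i) y).ne')

lemma sum_div_eq_of_isMin [Nonempty κ] (hK : ∀ i j, 0 < K i j) {y : κ → ℝ}
    (hmin : ∀ z, sinkhornPotential K p q y ≤ sinkhornPotential K p q z) (j : κ) :
    ∑ i, p i * (K i j * exp (y j) / ∑ j', K i j' * exp (y j')) = q j := by
  classical
  have hlocal : IsLocalMin
      (fun t => sinkhornPotential K p q fun j' => y j' + t * (Pi.single j 1 : κ → ℝ) j') 0 :=
    .of_forall fun t => by simpa using hmin _
  simpa [Pi.single_apply, sub_eq_zero] using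
    hlocal.hasDerivAt_eq_zero (hasDerivAt_line hK y (Pi.single j 1))

/-- Translation invariance lets one restrict to `y ≤ 0` with `max y = 0`, and there
`add_mul_sub_le_of_forall_le` confines the sublevel set `{y | F y ≤ F 0}` to a box. -/
lemma exists_isMin [Nonempty κ] (hK : ∀ i j, 0 < K i j) (hp : ∀ i, 0 ≤ p i)
    (hq : ∀ j, 0 < q j) (hsum : ∑ i, p i = ∑ j, q j) :
    ∃ y, ∀ z, sinkhornPotential K p q y ≤ sinkhornPotential K p q z := by
  set F := sinkhornPotential K p q
  set c := univ.inf' univ_nonempty fun k => ∑ i, p i * log (K i k)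
  have hbox : ∀ z k, (∀ j, z j ≤ z k) → z k = 0 → F z ≤ F 0 →
      z ∈ Set.Icc (fun j => -((F 0 - c) / q j)) 0 := by
    intro z k hz hzk hF
    refine ⟨fun j => ?_, fun j => (hz j).trans_eq hzk⟩
    have hck : c ≤ ∑ i, p i * log (K i k) := inf'_le _ (mem_univ k)
    have : ∑ i, p i * log (K i k) + q j * (z k - z j) ≤ F z :=
      add_mul_sub_le_of_forall_le hK hp (fun j => (hq j).le) hsum hz j
    rw [hzk] at this
    rw [neg_le, le_div_iff₀ (hq j)]
    linarith
  obtain ⟨y, -, hy⟩ := isCompact_Icc.exists_isMinOn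
    ⟨0, hbox 0 (Classical.arbitrary κ) (fun _ => le_rfl) rfl le_rfl⟩ (continuous hK).continuousOn
  refine ⟨y, fun z => ?_⟩
  obtain ⟨k, -, hk⟩ := exists_max_image univ z univ_nonempty
  have hshift : F (fun j => z j + -z k) = F z := add_const hK hsum z _
  by_cases hF : F (fun j => z j + -z k) ≤ F 0
  · rw [← hshift]
    exact hy (hbox _ k (fun j => by simpa using hk j (mem_univ j)) (by simp) hF)
  · have h0 : F y ≤ F 0 := hy (hbox 0 k (fun _ => le_rfl) rfl le_rfl)
    linarith

end sinkhornPotential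

theorem exists_scaling [Nonempty κ] {K : ι → κ → ℝ} {p : ι → ℝ} {q : κ → ℝ}
    (hK : ∀ i j, 0 < K i j) (hp : ∀ i, 0 < p i) (hq : ∀ j, 0 < q j)
    (hsum : ∑ i, p i = ∑ j, q j) :
    ∃ u : ι → ℝ, ∃ v : κ → ℝ, (∀ i, 0 < u i) ∧ (∀ j, 0 < v j) ∧
      (∀ i, ∑ j, u i * K i j * v j = p i) ∧ (∀ j, ∑ i, u i * K i j * v j = q j) := by
  obtain ⟨y, hy⟩ := sinkhornPotential.exists_isMin hK (fun i => (hp i).le) hq hsum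
  have hr (i : ι) := sum_mul_exp_pos (hK i) y
  refine ⟨fun i => p i / ∑ j, K i j * exp (y j), fun j => exp (y j),
    fun i => div_pos (hp i) (hr i), fun j => exp_pos _, fun i => ?_, fun j => ?_⟩
  · simp_rw [mul_assoc, ← mul_sum]
    exact div_mul_cancel₀ _ (hr i).ne'
  · rw [← sinkhornPotential.sum_div_eq_of_isMin hK hy j]
    exact sum_congr rfl fun i _ => by ring

theorem exists_eq_const_of_rescaled_sums_eq [Nonempty ι] [Nonempty κ] {w : ι → κ → ℝ}
    {r : ι → ℝ} {s : κ → ℝ} (hw : ∀ i j, 0 < w i j) (hr : ∀ i, 0 < r i)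
    (hrow : ∀ i, ∑ j, w i j * (r i * s j) = ∑ j, w i j)
    (hcol : ∀ j, ∑ i, w i j * (r i * s j) = ∑ i, w i j) :
    ∃ c, 0 < c ∧ (∀ i, r i = c) ∧ ∀ j, s j = c⁻¹ := by
  obtain ⟨i₀, -, hi₀⟩ := exists_max_image univ r univ_nonempty
  set c := r i₀
  have hc : 0 < c := hr i₀
  have hs_ge (j : κ) : 1 ≤ c * s j := by
    have hpos : 0 < ∑ i, w i j * r i := sum_pos (fun i _ => mul_pos (hw i j) (hr i)) univ_nonempty
    refine le_of_mul_le_mul_right ?_ hpos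
    calc 1 * ∑ i, w i j * r i ≤ c * ∑ i, w i j := by
          rw [one_mul, mul_sum]
          exact sum_le_sum fun i _ => by nlinarith [hi₀ i (mem_univ i), hw i j]
      _ = c * s j * ∑ i, w i j * r i := by
          rw [← hcol j, mul_sum, mul_sum]
          exact sum_congr rfl fun i _ => by ring
  have hs (j : κ) : s j = c⁻¹ := by
    have hzero : ∑ j, w i₀ j * (c * s j - 1) = 0 := by
      simp only [mul_sub, mul_one, sum_sub_distrib]
      exact sub_eq_zero.2 (hrow i₀)
    have := (sum_eq_zero_iff_of_nonneg fun j _ =>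
      mul_nonneg (hw i₀ j).le (sub_nonneg.2 (hs_ge j))).1 hzero j (mem_univ j)
    rw [mul_eq_zero, sub_eq_zero] at this
    rcases this with h | h
    · exact absurd h (hw i₀ j).ne'
    · exact eq_inv_of_mul_eq_one_right h
  refine ⟨c, hc, fun i => ?_, hs⟩
  have hpos : 0 < ∑ j, w i j := sum_pos (fun j _ => hw i j) univ_nonempty
  have := hrow i
  simp only [hs, ← sum_mul] at this
  rwa [mul_eq_left₀ hpos.ne', mul_inv_eq_one₀ hc.ne'] at this

theorem exists_eq_mul_of_scaling_sums_eq [Nonempty ι] [Nonempty κ] {K : ι → κ → ℝ}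
    {u u' : ι → ℝ} {v v' : κ → ℝ} (hK : ∀ i j, 0 < K i j) (hu : ∀ i, 0 < u i)
    (hv : ∀ j, 0 < v j) (hu' : ∀ i, 0 < u' i)
    (hrow : ∀ i, ∑ j, u' i * K i j * v' j = ∑ j, u i * K i j * v j)
    (hcol : ∀ j, ∑ i, u' i * K i j * v' j = ∑ i, u i * K i j * v j) :
    ∃ c, 0 < c ∧ (∀ i, u' i = c * u i) ∧ ∀ j, v' j = v j / c := by
  have hratio (i : ι) (j : κ) :
      u' i * K i j * v' j = u i * K i j * v j * (u' i / u i * (v' j / v j)) := by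
    field_simp [(hu i).ne', (hv j).ne']
  obtain ⟨c, hc, hr, hs⟩ := exists_eq_const_of_rescaled_sums_eq (r := fun i => u' i / u i)
    (s := fun j => v' j / v j) (fun i j => mul_pos (mul_pos (hu i) (hK i j)) (hv j))
    (fun i => div_pos (hu' i) (hu i)) (fun i => by simpa only [hratio] using hrow i)
    (fun j => by simpa only [hratio] using hcol j)
  refine ⟨c, hc, fun i => ?_, fun j => ?_⟩
  · rw [← hr i, div_mul_cancel₀ _ (hu i).ne']
  · rw [div_eq_mul_inv, ← hs j, mul_div_cancel₀ _ (hv j).ne']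

/-- Sinkhorn's matrix scaling theorem: existence and essential uniqueness of
positive diagonal scalings realizing prescribed row and column sums. -/
theorem sinkhorn_matrix_scaling {n m : ℕ}
    (K : Fin n → Fin m → ℝ) (hK : ∀ i j, 0 < K i j)
    (p : Fin n → ℝ) (pt : Fin m → ℝ)
    (hp : ∀ i, 0 < p i) (hpt : ∀ j, 0 < pt j)
    (hsum : ∑ i, p i = ∑ j, pt j) :
    ∃ u : Fin n → ℝ, ∃ v : Fin m → ℝ,
      (∀ i, 0 < u i) ∧ (∀ j, 0 < v j) ∧
      (∀ i, ∑ j, u i * K i j * v j = p i) ∧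
      (∀ j, ∑ i, u i * K i j * v j = pt j) ∧
      (∀ u' : Fin n → ℝ, ∀ v' : Fin m → ℝ,
        (∀ i, 0 < u' i) → (∀ j, 0 < v' j) →
        (∀ i, ∑ j, u' i * K i j * v' j = p i) →
        (∀ j, ∑ i, u' i * K i j * v' j = pt j) →
        ∃ c : ℝ, 0 < c ∧ (∀ i, u' i = c * u i) ∧ (∀ j, v' j = v j / c)) := by
  have hnm := nonempty_iff_of_sum_eq hp hpt hsum
  rcases isEmpty_or_nonempty (Fin m) with hm | hm
  · have : IsEmpty (Fin n) := by rwa [← not_nonempty_iff, hnm, not_nonempty_iff]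
    exact ⟨1, 1, isEmptyElim, isEmptyElim, isEmptyElim, isEmptyElim,
      fun _ _ _ _ _ _ => ⟨1, one_pos, isEmptyElim, isEmptyElim⟩⟩
  have : Nonempty (Fin n) := hnm.2 hm
  obtain ⟨u, v, hu, hv, hrow, hcol⟩ := exists_scaling hK hp hpt hsum
  refine ⟨u, v, hu, hv, hrow, hcol, fun u' v' hu' _ hrow' hcol' => ?_⟩
  exact exists_eq_mul_of_scaling_sums_eq hK hu hv hu'
    (fun i => (hrow' i).trans (hrow i).symm) (fun j => (hcol' j).trans (hcol j).symm)
end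

section
/- Let the entropy-regularized nested divergence de_S and the nested (Wasserstein) distance d_W be computed between two scenario trees of depth T in which every node has at most m (respectively m̃) immediate successors. Then de_S - d_W ≤ T·(log m + log m̃)/λ for every λ > 0; in particular |de_S - d_W| ≤ T·(log m + log m̃)/λ since also de_S ≤ d_W. -/
/-!
The entropy `∑ π log π` of a probability vector lies in `[-log N, 0]`, where `N` is the number
of atoms; for couplings of two depth-`T` trees `N = (m · m̃)^T`. Testing the optimality of the
Sinkhorn plan against the Wasserstein plan shows that the entropic value is at most `d_W`, and
testing the optimality of the Wasserstein plan against the Sinkhorn plan shows that it is at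
least `d_W - log N / λ`.
-/

open Finset

namespace Real

lemma sum_mul_log_nonpos {α : Type*} [Fintype α] {p : α → ℝ}
    (hp₀ : ∀ a, 0 ≤ p a) (hp₁ : ∑ a, p a = 1) :
    ∑ a, p a * log (p a) ≤ 0 :=
  sum_nonpos fun a _ ↦ mul_log_nonpos (hp₀ a)
    (hp₁ ▸ single_le_sum (fun b _ ↦ hp₀ b) (mem_univ a))

lemma neg_log_card_le_sum_mul_log {α : Type*} [Fintype α] {p : α → ℝ}
    (hp₀ : ∀ a, 0 ≤ p a) (hp₁ : ∑ a, p a = 1) :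
    -log (Fintype.card α) ≤ ∑ a, p a * log (p a) := by
  have : Nonempty α := by
    by_contra h
    simp [not_nonempty_iff.mp h] at hp₁
  set N : ℝ := (Fintype.card α : ℝ)
  have hN : 0 < N := by positivity
  -- Jensen for the convex function `x log x` with uniform weights `1 / N`
  have jensen := convexOn_mul_log.map_sum_le (t := univ) (w := fun _ ↦ N⁻¹) (p := p)
    (fun _ _ ↦ by positivity) (by simp [N, hN.ne']) (fun a _ ↦ Set.mem_Ici.mpr (hp₀ a))
  simp only [smul_eq_mul, ← mul_sum, hp₁, mul_one, log_inv] at jensen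
  exact le_of_mul_le_mul_left jensen (inv_pos.mpr hN)

lemma log_natCast_mul_le (a b : ℕ) : log ((a * b : ℕ) : ℝ) ≤ log a + log b := by
  rcases eq_or_ne a 0 with rfl | ha
  · simp [log_natCast_nonneg]
  rcases eq_or_ne b 0 with rfl | hb
  · simp [log_natCast_nonneg]
  rw [Nat.cast_mul, log_mul (by positivity) (by positivity)]

lemma log_card_fun_prod_fun_le (T : ℕ) (α β : Type*) [Fintype α] [Fintype β] :
    log (Fintype.card ((Fin T → α) × (Fin T → β))) ≤
      T * (log (Fintype.card α) + log (Fintype.card β)) := by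
  simpa only [Fintype.card_prod, Fintype.card_fun, Fintype.card_fin, Nat.cast_pow, log_pow,
    mul_add] using log_natCast_mul_le (Fintype.card α ^ T) (Fintype.card β ^ T)

end Real

/-- Processes of depth `T` with branching at most `m` (resp. `mt`) are modelled by probability
distributions on the path space `Fin T → Fin m`; the feasible set `Pi` of couplings, which
carries the nested (conditional-marginal) constraints, is abstract, with `πW` an optimizer of the
linear nested-distance program and `πS` one of the entropy-regularized program over `Pi`. -/
theorem nested_sinkhorn_gap_bound {m mt T : ℕ}
    (c : ((Fin T → Fin m) × (Fin T → Fin mt)) → ℝ)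
    (lam : ℝ) (hlam : 0 < lam)
    (Pi : Set (((Fin T → Fin m) × (Fin T → Fin mt)) → ℝ))
    (hprob : ∀ π ∈ Pi, (∀ ω, 0 ≤ π ω) ∧ ∑ ω, π ω = 1)
    (πW πS : ((Fin T → Fin m) × (Fin T → Fin mt)) → ℝ)
    (hWmem : πW ∈ Pi) (hSmem : πS ∈ Pi)
    (hWopt : ∀ π ∈ Pi, ∑ ω, πW ω * c ω ≤ ∑ ω, π ω * c ω)
    (hSopt : ∀ π ∈ Pi,
      (∑ ω, πS ω * c ω) + (1/lam) * ∑ ω, πS ω * Real.log (πS ω)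
        ≤ (∑ ω, π ω * c ω) + (1/lam) * ∑ ω, π ω * Real.log (π ω)) :
    ((∑ ω, πS ω * c ω) + (1/lam) * ∑ ω, πS ω * Real.log (πS ω))
        - (∑ ω, πW ω * c ω) ≤ T * (Real.log m + Real.log mt) / lam ∧
    |((∑ ω, πS ω * c ω) + (1/lam) * ∑ ω, πS ω * Real.log (πS ω))
        - (∑ ω, πW ω * c ω)| ≤ T * (Real.log m + Real.log mt) / lam := by
  obtain ⟨hS₀, hS₁⟩ := hprob πS hSmem
  obtain ⟨hW₀, hW₁⟩ := hprob πW hWmem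
  set K := (T : ℝ) * (Real.log m + Real.log mt)
  set gap := ((∑ ω, πS ω * c ω) + (1/lam) * ∑ ω, πS ω * Real.log (πS ω))
    - (∑ ω, πW ω * c ω)
  have hK : 0 ≤ K / lam := by
    have := Real.log_natCast_nonneg m
    have := Real.log_natCast_nonneg mt
    positivity
  have hentropyS : -K ≤ ∑ ω, πS ω * Real.log (πS ω) := by
    have hcard := Real.log_card_fun_prod_fun_le T (Fin m) (Fin mt)
    simp only [Fintype.card_fin] at hcard
    linarith [Real.neg_log_card_le_sum_mul_log hS₀ hS₁]
  have hgap_nonpos : gap ≤ 0 := by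
    have := mul_nonpos_of_nonneg_of_nonpos (one_div_nonneg.mpr hlam.le)
      (Real.sum_mul_log_nonpos hW₀ hW₁)
    linarith [hSopt πW hWmem]
  have hgap_ge : -(K / lam) ≤ gap := by
    have := mul_le_mul_of_nonneg_left hentropyS (one_div_nonneg.mpr hlam.le)
    rw [mul_neg, one_div_mul_eq_div] at this
    linarith [hWopt πS hSmem]
  exact ⟨hgap_nonpos.trans hK, abs_le.mpr ⟨hgap_ge, hgap_nonpos.trans hK⟩⟩
end
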